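/- Let G be a simple graph of Class 2 with a critical edge e1 = x y1, let φ ∈ C^Δ(G − e1), and let F = (x, e1, y1, …, e_p, y_p) be a multi-fan at x with respect to e1 and φ. If α ∈ φ̄(x) and β ∈ φ̄(y_i) for some 1 ≤ i ≤ p, then the (α,β)-chain of G − e1 containing x is a path with endvertices x and y_i. -/

import Mathlib

/-! Write `H = G - x y 0`. No color is missing both at `x` and at a leaf `y i`: a common missing
color at `x` and `y 0` would extend `φ` to a `Δ`-edge-coloring of `G`, and for `i ≠ 0`
recoloring `x y i` with it frees `φ (x y i)` at `x` while that color stays missing at an earlier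
leaf. Hence `β` is present at `x` and `α` at `y i`, so both have degree one in the
`(α,β)`-chain. If the chain through `x` avoided `y i`, swapping `α` and `β` on the chain through
`y i` would make `α` missing at both `x` and `y i`; the multi-fan survives the swap because, by
induction on `i`, a leaf `y m` reached by that chain cannot miss the color `β` of some `x y l`. -/

/-- A proper `k`-edge-coloring of `G` with colors from `{1, …, k}`: every edge of `G`
receives a color in `{1, …, k}` and distinct edges sharing a vertex get distinct colors. -/
def IsProperEdgeColoring {V : Type*} (G : SimpleGraph V) (k : ℕ) (φ : Sym2 V → ℕ) : Prop :=
  (∀ e ∈ G.edgeSet, φ e ∈ Finset.Icc 1 k) ∧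
    ∀ e₁ ∈ G.edgeSet, ∀ e₂ ∈ G.edgeSet, e₁ ≠ e₂ → (∃ v, v ∈ e₁ ∧ v ∈ e₂) → φ e₁ ≠ φ e₂

/-- The chromatic index `χ'(G)`: the least `k` such that `G` has a proper `k`-edge-coloring. -/
noncomputable def chromIndex {V : Type*} (G : SimpleGraph V) : ℕ :=
  sInf {k | ∃ φ : Sym2 V → ℕ, IsProperEdgeColoring G k φ}

/-- The set `φ̄(u)` of colors of `{1, …, k}` missing at `u`, i.e. not used by `φ` on
any edge of `G` incident with `u`. -/
def missing {V : Type*} (G : SimpleGraph V) (k : ℕ) (φ : Sym2 V → ℕ) (u : V) : Set ℕ :=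
  {c | c ∈ Finset.Icc 1 k ∧ ∀ v, G.Adj u v → φ s(u, v) ≠ c}

/-- The spanning subgraph of `G` consisting of the edges colored `α` or `β`;
its connected components are the `(α,β)`-chains of `G`. -/
def chainGraph {V : Type*} (G : SimpleGraph V) (φ : Sym2 V → ℕ) (α β : ℕ) :
    SimpleGraph V :=
  SimpleGraph.fromRel fun u v => G.Adj u v ∧ (φ s(u, v) = α ∨ φ s(u, v) = β)

open SimpleGraph Function

section Coloring

variable {V : Type*} {H K : SimpleGraph V} {k : ℕ} {φ : Sym2 V → ℕ}

theorem isProperEdgeColoring_iff_adj :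
    IsProperEdgeColoring H k φ ↔
      (∀ u v, H.Adj u v → φ s(u, v) ∈ Finset.Icc 1 k) ∧
        ∀ u v w, H.Adj u v → H.Adj u w → v ≠ w → φ s(u, v) ≠ φ s(u, w) := by
  constructor
  · rintro ⟨hcol, hne⟩
    refine ⟨fun u v huv => hcol _ huv, fun u v w huv huw hvw => ?_⟩
    refine hne _ huv _ huw (fun h => hvw (Sym2.congr_right.1 h)) ⟨u, ?_, ?_⟩ <;>
      exact Sym2.mem_mk_left _ _
  · rintro ⟨hcol, hne⟩
    refine ⟨fun e => Sym2.ind (fun u v => hcol u v) e, ?_⟩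
    rintro e₁ he₁ e₂ he₂ h₁₂ ⟨u, hu₁, hu₂⟩
    obtain ⟨v, rfl⟩ := Sym2.mem_iff_exists.1 hu₁
    obtain ⟨w, rfl⟩ := Sym2.mem_iff_exists.1 hu₂
    exact hne u v w he₁ he₂ (fun h => h₁₂ (h ▸ rfl))

namespace IsProperEdgeColoring

theorem mem_Icc (hφ : IsProperEdgeColoring H k φ) {u v : V} (h : H.Adj u v) :
    φ s(u, v) ∈ Finset.Icc 1 k :=
  (isProperEdgeColoring_iff_adj.1 hφ).1 u v h

theorem ne_of_adj (hφ : IsProperEdgeColoring H k φ) {u v w : V} (hv : H.Adj u v)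
    (hw : H.Adj u w) (hvw : v ≠ w) : φ s(u, v) ≠ φ s(u, w) :=
  (isProperEdgeColoring_iff_adj.1 hφ).2 u v w hv hw hvw

theorem update [DecidableEq V] (hφ : IsProperEdgeColoring H k φ) {a b : V} {γ : ℕ}
    (ha : γ ∈ missing H k φ a) (hb : γ ∈ missing H k φ b)
    (hK : K.edgeSet ⊆ insert s(a, b) H.edgeSet) :
    IsProperEdgeColoring K k (update φ s(a, b) γ) := by
  have hγ : ∀ u ∈ s(a, b), γ ∈ missing H k φ u := by
    rintro u hu
    rcases Sym2.mem_iff.1 hu with rfl | rfl <;> assumption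
  have hsplit : ∀ u v, K.Adj u v → s(u, v) = s(a, b) ∨ H.Adj u v := fun u v h => hK h
  refine isProperEdgeColoring_iff_adj.2 ⟨fun u v huv => ?_, fun u v w huv huw hvw => ?_⟩
  · rcases eq_or_ne s(u, v) s(a, b) with h | h
    · rw [h, update_self]
      exact ha.1
    · rw [update_of_ne h]
      exact hφ.mem_Icc ((hsplit u v huv).resolve_left h)
  have hrecolored : ∀ v w, K.Adj u w → v ≠ w → s(u, v) = s(a, b) →
      Function.update φ s(a, b) γ s(u, v) ≠ Function.update φ s(a, b) γ s(u, w) := by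
    intro v w huw hvw h
    have hw : s(u, w) ≠ s(a, b) := fun h' => hvw (Sym2.congr_right.1 (h.trans h'.symm))
    rw [h, update_self, update_of_ne hw]
    exact ((hγ u (h ▸ Sym2.mem_mk_left u v)).2 w ((hsplit u w huw).resolve_left hw)).symm
  by_cases hv : s(u, v) = s(a, b)
  · exact hrecolored v w huw hvw hv
  by_cases hw : s(u, w) = s(a, b)
  · exact (hrecolored w v huv hvw.symm hw).symm
  rw [update_of_ne hv, update_of_ne hw]
  exact hφ.ne_of_adj ((hsplit u v huv).resolve_left hv) ((hsplit u w huw).resolve_left hw) hvw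

theorem of_perm_at_vertex (hφ : IsProperEdgeColoring H k φ) {ψ : Sym2 V → ℕ}
    (σ : V → Equiv.Perm ℕ) (hσ : ∀ u, ∀ c ∈ Finset.Icc 1 k, σ u c ∈ Finset.Icc 1 k)
    (hψ : ∀ u v, H.Adj u v → ψ s(u, v) = σ u (φ s(u, v))) : IsProperEdgeColoring H k ψ := by
  refine isProperEdgeColoring_iff_adj.2 ⟨fun u v huv => ?_, fun u v w huv huw hvw => ?_⟩
  · rw [hψ u v huv]
    exact hσ u _ (hφ.mem_Icc huv)
  · rw [hψ u v huv, hψ u w huw]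
    exact (σ u).injective.ne (hφ.ne_of_adj huv huw hvw)

end IsProperEdgeColoring

theorem chromIndex_le (hφ : IsProperEdgeColoring H k φ) : chromIndex H ≤ k :=
  Nat.sInf_le ⟨φ, hφ⟩

theorem exists_adj_of_not_mem_missing {u : V} {c : ℕ} (hc : c ∈ Finset.Icc 1 k)
    (hu : c ∉ missing H k φ u) : ∃ v, H.Adj u v ∧ φ s(u, v) = c := by
  by_contra! h
  exact hu ⟨hc, h⟩

theorem missing_update_of_ne [DecidableEq V] {a b u : V} (ha : u ≠ a) (hb : u ≠ b) (γ : ℕ) :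
    missing H k (update φ s(a, b) γ) u = missing H k φ u := by
  have heq : ∀ v, update φ s(a, b) γ s(u, v) = φ s(u, v) := fun v =>
    update_of_ne (fun h => (Sym2.mem_iff.1 (h ▸ Sym2.mem_mk_left u v)).elim ha hb) _ _
  simp only [missing, heq]

theorem apply_mem_missing_update_self [DecidableEq V] (hφ : IsProperEdgeColoring H k φ)
    {a b : V} (hab : H.Adj a b) {γ : ℕ} (hγ : γ ∈ missing H k φ a) :
    φ s(a, b) ∈ missing H k (update φ s(a, b) γ) a := by
  refine ⟨hφ.mem_Icc hab, fun v hv => ?_⟩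
  rcases eq_or_ne v b with rfl | hvb
  · rw [update_self]
    exact (hγ.2 v hab).symm
  · rw [update_of_ne (fun h => hvb (Sym2.congr_right.1 h))]
    exact hφ.ne_of_adj hv hab hvb

theorem apply_mem_missing_of_perm_at_vertex {ψ : Sym2 V → ℕ} (σ : V → Equiv.Perm ℕ)
    (hψ : ∀ u v, H.Adj u v → ψ s(u, v) = σ u (φ s(u, v))) {u : V} {c : ℕ}
    (hc : c ∈ missing H k φ u) (hσc : σ u c ∈ Finset.Icc 1 k) : σ u c ∈ missing H k ψ u :=
  ⟨hσc, fun v huv => by rw [hψ u v huv]; exact (σ u).injective.ne (hc.2 v huv)⟩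

end Coloring

section Chain

variable {V : Type*} {H : SimpleGraph V} {k : ℕ} {φ : Sym2 V → ℕ} {α β : ℕ}

theorem chainGraph_adj {u v : V} :
    (chainGraph H φ α β).Adj u v ↔ H.Adj u v ∧ (φ s(u, v) = α ∨ φ s(u, v) = β) := by
  rw [chainGraph, fromRel_adj]
  constructor
  · rintro ⟨-, h | ⟨h, hc⟩⟩
    · exact h
    · exact ⟨h.symm, Sym2.eq_swap ▸ hc⟩
  · exact fun h => ⟨h.1.ne, Or.inl h⟩

theorem chainGraph_comm : chainGraph H φ α β = chainGraph H φ β α := by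
  ext u v
  simp only [chainGraph_adj, or_comm]

theorem ncard_neighborSet_chainGraph_eq_one (hφ : IsProperEdgeColoring H k φ) {u : V}
    (hα : α ∈ missing H k φ u) (hβ : β ∈ Finset.Icc 1 k) (hβu : β ∉ missing H k φ u) :
    ((chainGraph H φ α β).neighborSet u).ncard = 1 := by
  obtain ⟨v, huv, hv⟩ := exists_adj_of_not_mem_missing hβ hβu
  suffices (chainGraph H φ α β).neighborSet u = {v} by rw [this, Set.ncard_singleton]
  ext w
  simp only [mem_neighborSet, Set.mem_singleton_iff, chainGraph_adj]
  constructor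
  · rintro ⟨huw, hw | hw⟩
    · exact absurd hw (hα.2 w huw)
    · by_contra hwv
      exact hφ.ne_of_adj huw huv hwv (hw.trans hv.symm)
  · rintro rfl
    exact ⟨huv, Or.inr hv⟩

open Classical in
/-- The permutation of colors that a Kempe change on the `(α,β)`-chain through `w` applies
at the edges of `u`. -/
noncomputable def kempePerm (H : SimpleGraph V) (φ : Sym2 V → ℕ) (α β : ℕ) (w u : V) :
    Equiv.Perm ℕ :=
  if (chainGraph H φ α β).Reachable w u then Equiv.swap α β else 1

open Classical in
noncomputable def kempeChange (H : SimpleGraph V) (φ : Sym2 V → ℕ) (α β : ℕ) (w : V) :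
    Sym2 V → ℕ :=
  fun e => if ∃ u ∈ e, (chainGraph H φ α β).Reachable w u then Equiv.swap α β (φ e) else φ e

theorem kempePerm_apply_of_not_reachable {w u : V} (h : ¬(chainGraph H φ α β).Reachable w u)
    (c : ℕ) : kempePerm H φ α β w u c = c := by
  rw [kempePerm, if_neg h, Equiv.Perm.one_apply]

theorem kempePerm_apply_of_reachable {w u : V} (h : (chainGraph H φ α β).Reachable w u)
    (c : ℕ) : kempePerm H φ α β w u c = Equiv.swap α β c := by
  rw [kempePerm, if_pos h]

theorem kempeChange_apply {w u v : V} (huv : H.Adj u v) :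
    kempeChange H φ α β w s(u, v) = kempePerm H φ α β w u (φ s(u, v)) := by
  by_cases hu : (chainGraph H φ α β).Reachable w u
  · rw [kempePerm_apply_of_reachable hu, kempeChange, if_pos ⟨u, Sym2.mem_mk_left u v, hu⟩]
  rw [kempePerm_apply_of_not_reachable hu, kempeChange]
  split_ifs with hreach
  · obtain ⟨z, hz, hwz⟩ := hreach
    rcases Sym2.mem_iff.1 hz with rfl | rfl
    · exact absurd hwz hu
    -- the edge `uv` joins the chain through `w` only if it is colored `α` or `β`
    refine Equiv.swap_apply_of_ne_of_ne (fun h => hu ?_) (fun h => hu ?_)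
    · exact hwz.trans (chainGraph_adj.2 ⟨huv.symm, Or.inl (Sym2.eq_swap ▸ h)⟩).reachable
    · exact hwz.trans (chainGraph_adj.2 ⟨huv.symm, Or.inr (Sym2.eq_swap ▸ h)⟩).reachable
  · rfl

theorem kempePerm_mem_Icc (hα : α ∈ Finset.Icc 1 k) (hβ : β ∈ Finset.Icc 1 k) (w u : V) :
    ∀ c ∈ Finset.Icc 1 k, kempePerm H φ α β w u c ∈ Finset.Icc 1 k := by
  intro c hc
  by_cases h : (chainGraph H φ α β).Reachable w u
  · rw [kempePerm_apply_of_reachable h, Equiv.swap_apply_def]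
    split_ifs <;> assumption
  · rwa [kempePerm_apply_of_not_reachable h]

theorem IsProperEdgeColoring.kempeChange (hφ : IsProperEdgeColoring H k φ)
    (hα : α ∈ Finset.Icc 1 k) (hβ : β ∈ Finset.Icc 1 k) (w : V) :
    IsProperEdgeColoring H k (kempeChange H φ α β w) :=
  hφ.of_perm_at_vertex _ (kempePerm_mem_Icc hα hβ w) fun _ _ => kempeChange_apply

theorem kempePerm_mem_missing_kempeChange {w u : V} {c : ℕ} (hc : c ∈ missing H k φ u)
    (hσc : kempePerm H φ α β w u c ∈ Finset.Icc 1 k) :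
    kempePerm H φ α β w u c ∈ missing H k (kempeChange H φ α β w) u :=
  apply_mem_missing_of_perm_at_vertex _ (fun _ _ => kempeChange_apply) hc hσc

theorem mem_missing_kempeChange_of_not_reachable {w u : V}
    (h : ¬(chainGraph H φ α β).Reachable w u) {c : ℕ} (hc : c ∈ missing H k φ u) :
    c ∈ missing H k (kempeChange H φ α β w) u := by
  have hσ := kempePerm_apply_of_not_reachable h c
  have hmem := kempePerm_mem_missing_kempeChange hc (by rw [hσ]; exact hc.1)
  rwa [hσ] at hmem

end Chain

section MultiFan

variable {V : Type*} {G H : SimpleGraph V} {k n : ℕ} {φ : Sym2 V → ℕ} {x : V}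
  {y : Fin (n + 1) → V}

/-- `x, y 0, …, y i` is an initial segment of a multi-fan at `x` with respect to `x y 0`. -/
def IsMultiFanUpTo (H : SimpleGraph V) (k : ℕ) (φ : Sym2 V → ℕ) (x : V)
    (y : Fin (n + 1) → V) (i : Fin (n + 1)) : Prop :=
  ∀ l ≤ i, l ≠ 0 → ∃ m < l, φ s(x, y l) ∈ missing H k φ (y m)

theorem IsMultiFanUpTo.mono {i j : Fin (n + 1)} (hfan : IsMultiFanUpTo H k φ x y i)
    (hji : j ≤ i) : IsMultiFanUpTo H k φ x y j :=
  fun l hl => hfan l (hl.trans hji)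

theorem IsMultiFanUpTo.update [DecidableEq V] {i j : Fin (n + 1)}
    (hfan : IsMultiFanUpTo H k φ x y i) (hinj : Injective y) (hx : ∀ l, y l ≠ x) (hji : j < i)
    (γ : ℕ) : IsMultiFanUpTo H k (update φ s(x, y i) γ) x y j := by
  intro l hlj hl
  obtain ⟨m, hml, hm⟩ := hfan l (hlj.trans hji.le) hl
  have hli : l < i := hlj.trans_lt hji
  refine ⟨m, hml, ?_⟩
  rw [update_of_ne (fun h => hli.ne (hinj (Sym2.congr_right.1 h))),
    missing_update_of_ne (hx m) (hinj.ne (hml.trans hli).ne)]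
  exact hm

theorem deleteEdges_adj_of_ne_zero (hinj : Injective y) (hadj : ∀ l, G.Adj x (y l))
    {l : Fin (n + 1)} (hl : l ≠ 0) : (G.deleteEdges {s(x, y 0)}).Adj x (y l) :=
  deleteEdges_adj.2 ⟨hadj l, fun h => hl (hinj (Sym2.congr_right.1 h))⟩

theorem disjoint_missing_of_isMultiFanUpTo [DecidableEq V]
    (hG : ∀ ψ, ¬IsProperEdgeColoring G k ψ) (hinj : Injective y)
    (hadj : ∀ l, G.Adj x (y l)) (i : Fin (n + 1)) (φ : Sym2 V → ℕ)
    (hφ : IsProperEdgeColoring (G.deleteEdges {s(x, y 0)}) k φ)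
    (hfan : IsMultiFanUpTo (G.deleteEdges {s(x, y 0)}) k φ x y i) :
    Disjoint (missing (G.deleteEdges {s(x, y 0)}) k φ x)
      (missing (G.deleteEdges {s(x, y 0)}) k φ (y i)) := by
  induction i using WellFoundedLT.induction generalizing φ with
  | ind i IH =>
  rw [Set.disjoint_left]
  intro γ hγx hγy
  rcases eq_or_ne i 0 with rfl | hi
  · refine hG _ (hφ.update hγx hγy ?_)
    rw [edgeSet_deleteEdges, Set.insert_sdiff_singleton]
    exact Set.subset_insert _ _
  -- recoloring `x y i` with `γ` frees `φ (x y i)` at `x`, and it stays missing at `y m`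
  obtain ⟨m, hmi, hm⟩ := hfan i le_rfl hi
  have hx : ∀ l, y l ≠ x := fun l => (hadj l).ne.symm
  have hxy := deleteEdges_adj_of_ne_zero hinj hadj hi
  refine Set.disjoint_left.1
    (IH m hmi _ (hφ.update hγx hγy (Set.subset_insert _ _)) (hfan.update hinj hx hmi γ))
    (apply_mem_missing_update_self hφ hxy hγx) ?_
  rw [missing_update_of_ne (hx m) (hinj.ne hmi.ne)]
  exact hm

theorem reachable_chainGraph_of_isMultiFanUpTo [DecidableEq V]
    (hG : ∀ ψ, ¬IsProperEdgeColoring G k ψ) (hinj : Injective y) (hadj : ∀ l, G.Adj x (y l))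
    (hφ : IsProperEdgeColoring (G.deleteEdges {s(x, y 0)}) k φ) {α : ℕ}
    (hα : α ∈ missing (G.deleteEdges {s(x, y 0)}) k φ x) (i : Fin (n + 1)) (β : ℕ)
    (hfan : IsMultiFanUpTo (G.deleteEdges {s(x, y 0)}) k φ x y i)
    (hβ : β ∈ missing (G.deleteEdges {s(x, y 0)}) k φ (y i)) :
    (chainGraph (G.deleteEdges {s(x, y 0)}) φ α β).Reachable x (y i) := by
  set H := G.deleteEdges {s(x, y 0)}
  induction i using WellFoundedLT.induction generalizing β with
  | ind i IH =>
  by_contra hxi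
  set C := chainGraph H φ α β
  have hix : ¬C.Reachable (y i) x := fun h => hxi h.symm
  have hαx : α ∈ missing H k (kempeChange H φ α β (y i)) x :=
    mem_missing_kempeChange_of_not_reachable hix hα
  have hαi : α ∈ missing H k (kempeChange H φ α β (y i)) (y i) := by
    have hσ : kempePerm H φ α β (y i) (y i) β = α := by
      rw [kempePerm_apply_of_reachable Reachable.rfl, Equiv.swap_apply_right]
    have h := kempePerm_mem_missing_kempeChange (w := y i) hβ (by rw [hσ]; exact hα.1)
    rwa [hσ] at h
  have hfanψ : IsMultiFanUpTo H k (kempeChange H φ α β (y i)) x y i := by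
    intro l hli hl
    obtain ⟨m, hml, hm⟩ := hfan l hli hl
    have hxl := deleteEdges_adj_of_ne_zero hinj hadj hl
    have hcα : φ s(x, y l) ≠ α := hα.2 _ hxl
    -- were `φ (x y l) = β`, the chain through `x` would already reach `y m`, hence `y i`
    have hσ : kempePerm H φ α β (y i) (y m) (φ s(x, y l)) = φ s(x, y l) := by
      by_cases him : C.Reachable (y i) (y m)
      · rw [kempePerm_apply_of_reachable him]
        refine Equiv.swap_apply_of_ne_of_ne hcα fun hcβ => hxi ?_
        exact (IH m (hml.trans_le hli) β (hfan.mono (hml.trans_le hli).le) (hcβ ▸ hm)).trans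
          him.symm
      · exact kempePerm_apply_of_not_reachable him _
    refine ⟨m, hml, ?_⟩
    rw [kempeChange_apply hxl, kempePerm_apply_of_not_reachable hix, ← hσ]
    exact kempePerm_mem_missing_kempeChange hm (by rw [hσ]; exact hm.1)
  exact Set.disjoint_left.1 (disjoint_missing_of_isMultiFanUpTo hG hinj hadj i _
    (hφ.kempeChange hα.1 hβ.1 (y i)) hfanψ) hαx hαi

end MultiFan

theorem multifan_chain_endvertices_general {V : Type*} [Fintype V] [DecidableEq V]
    (G : SimpleGraph V) [DecidableRel G.Adj]
    (hClass2 : chromIndex G = G.maxDegree + 1)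
    (x : V) (p : ℕ) (hp : 0 < p) (y : Fin p → V)
    (hinj : Function.Injective y)
    (hadj : ∀ i : Fin p, G.Adj x (y i))
    (φ : Sym2 V → ℕ)
    (hφ : IsProperEdgeColoring (G.deleteEdges {s(x, y ⟨0, hp⟩)}) G.maxDegree φ)
    (hfan : ∀ i : Fin p, 0 < (i : ℕ) → ∃ j : Fin p, j < i ∧
      φ s(x, y i) ∈ missing (G.deleteEdges {s(x, y ⟨0, hp⟩)}) G.maxDegree φ (y j))
    (α β : ℕ) (i : Fin p)
    (hα : α ∈ missing (G.deleteEdges {s(x, y ⟨0, hp⟩)}) G.maxDegree φ x)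
    (hβ : β ∈ missing (G.deleteEdges {s(x, y ⟨0, hp⟩)}) G.maxDegree φ (y i)) :
    x ≠ y i ∧
      (chainGraph (G.deleteEdges {s(x, y ⟨0, hp⟩)}) φ α β).Reachable x (y i) ∧
      ((chainGraph (G.deleteEdges {s(x, y ⟨0, hp⟩)}) φ α β).neighborSet x).ncard = 1 ∧
      ((chainGraph (G.deleteEdges {s(x, y ⟨0, hp⟩)}) φ α β).neighborSet (y i)).ncard = 1 := by
  obtain ⟨n, rfl⟩ : ∃ n, p = n + 1 := ⟨p - 1, by omega⟩
  have h0 : (⟨0, hp⟩ : Fin (n + 1)) = 0 := rfl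
  rw [h0] at hφ hfan hα hβ ⊢
  have hG : ∀ ψ, ¬IsProperEdgeColoring G G.maxDegree ψ := fun ψ hψ => by
    have := chromIndex_le hψ
    omega
  have hfan' : IsMultiFanUpTo _ _ φ x y i := fun l _ hl =>
    hfan l (Nat.pos_of_ne_zero (Fin.val_ne_zero_iff.2 hl))
  have hdisj := disjoint_missing_of_isMultiFanUpTo hG hinj hadj i φ hφ hfan'
  refine ⟨(hadj i).ne, reachable_chainGraph_of_isMultiFanUpTo hG hinj hadj hφ hα i β hfan' hβ,
    ncard_neighborSet_chainGraph_eq_one hφ hα hβ.1 (Set.disjoint_right.1 hdisj hβ), ?_⟩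
  rw [chainGraph_comm]
  exact ncard_neighborSet_chainGraph_eq_one hφ hβ hα.1 (Set.disjoint_left.1 hdisj hα)

/-- If `G` is Class 2 with critical edge `e₁ = x y₀`,
`φ ∈ C^Δ(G - e₁)`, `F` is a multi-fan at `x`, `α ∈ φ̄(x)` and `β ∈ φ̄(y i)`, then the
`(α,β)`-chain of `G - e₁` containing `x` is a path with endvertices `x` and `y i`
(they are distinct, joined in the chain graph, and each has exactly one neighbor there). -/
theorem multifan_chain_endvertices {V : Type*} [Fintype V] [DecidableEq V]
    (G : SimpleGraph V) [DecidableRel G.Adj]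
    (hClass2 : chromIndex G = G.maxDegree + 1)
    (x : V) (p : ℕ) (hp : 0 < p) (y : Fin p → V)
    (hinj : Function.Injective y)
    (hadj : ∀ i : Fin p, G.Adj x (y i))
    (hcritical : chromIndex (G.deleteEdges {s(x, y ⟨0, hp⟩)}) < chromIndex G)
    (φ : Sym2 V → ℕ)
    (hφ : IsProperEdgeColoring (G.deleteEdges {s(x, y ⟨0, hp⟩)}) G.maxDegree φ)
    (hfan : ∀ i : Fin p, 0 < (i : ℕ) → ∃ j : Fin p, j < i ∧
      φ s(x, y i) ∈ missing (G.deleteEdges {s(x, y ⟨0, hp⟩)}) G.maxDegree φ (y j))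
    (α β : ℕ) (hαβ : α ≠ β) (i : Fin p)
    (hα : α ∈ missing (G.deleteEdges {s(x, y ⟨0, hp⟩)}) G.maxDegree φ x)
    (hβ : β ∈ missing (G.deleteEdges {s(x, y ⟨0, hp⟩)}) G.maxDegree φ (y i)) :
    x ≠ y i ∧
      (chainGraph (G.deleteEdges {s(x, y ⟨0, hp⟩)}) φ α β).Reachable x (y i) ∧
      ((chainGraph (G.deleteEdges {s(x, y ⟨0, hp⟩)}) φ α β).neighborSet x).ncard = 1 ∧
      ((chainGraph (G.deleteEdges {s(x, y ⟨0, hp⟩)}) φ α β).neighborSet (y i)).ncard = 1 :=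
  multifan_chain_endvertices_general G hClass2 x p hp y hinj hadj φ hφ hfan α β i hα hβ
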